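/- For every integer k ≥ 4, the sequence {S(R_{2,3,…,k−1,k}(n) + R_{2,3,…,k−2,k}(n))} of exponential sums satisfies the homogeneous linear recurrence with characteristic polynomial X^k − 2X^{k−1} + 2X − 2. -/

import Mathlib

open Finset

/-- Exponential sum of a Boolean function in `n` variables. -/
noncomputable def boolExpSum (n : ℕ) (F : (Fin n → ZMod 2) → ZMod 2) : ℤ :=
  ∑ x : Fin n → ZMod 2, (-1 : ℤ) ^ (F x).val

/-- Extension of a vector `x ∈ F₂ⁿ` to a function on `ℕ` (index `i` corresponds
to the variable `X_{i+1}`; out-of-range indices give `0`). -/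
def extVar {n : ℕ} (x : Fin n → ZMod 2) : ℕ → ZMod 2 :=
  fun i => if h : i < n then x ⟨i, h⟩ else 0

/-- The monomial rotation symmetric Boolean function in `n` variables whose base
monomial has (0-indexed) offset set `s`: `∑_{i=1}^n ∏_{l∈s} X_{i+l}`, cyclic mod `n`. -/
def rotOffsets (s : Finset ℕ) (n : ℕ) (x : Fin n → ZMod 2) : ZMod 2 :=
  ∑ i ∈ Finset.range n, ∏ l ∈ s, extVar x ((i + l) % n)

/-- The sum `R_{2,3,…,k−1,k}(n) + R_{2,3,…,k−2,k}(n)` as a Boolean function in `n`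
variables; the first rotation has offsets `{0,1,…,k−1}` and the second has
offsets `{0,1,…,k−3, k−1}`. -/
def Gfun (k n : ℕ) (x : Fin n → ZMod 2) : ZMod 2 :=
  rotOffsets (Finset.range k) n x + rotOffsets (insert (k - 1) (Finset.range (k - 2))) n x

namespace RotRec

abbrev St (κ : ℕ) := Fin (κ+3) → ZMod 2

variable {κ : ℕ}

def qS (κ : ℕ) : St κ := fun i => if (i:ℕ) = κ+2 then 0 else 1
def rS (κ : ℕ) : St κ := fun i => if (i:ℕ) = κ+1 then 0 else 1
def pred (c : ZMod 2) (t : St κ) : St κ :=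
  fun i => if (i:ℕ) = 0 then c else t ⟨(i:ℕ)-1, by omega⟩
def lastS (t : St κ) : ZMod 2 := t ⟨κ+2, by omega⟩
def sg (κ : ℕ) (s : St κ) (b : ZMod 2) : ℤ := if s = qS κ ∧ b = 1 then -1 else 1

noncomputable def T (κ : ℕ) : Module.End ℤ (St κ → ℤ) where
  toFun v := fun t => ∑ c : ZMod 2, sg κ (pred c t) (lastS t) * v (pred c t)
  map_add' u v := by
    funext t
    simp [mul_add, Finset.sum_add_distrib]
  map_smul' a v := by
    funext t
    simp only [Pi.smul_apply, smul_eq_mul, RingHom.id_apply, Finset.mul_sum]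
    exact Finset.sum_congr rfl (fun c _ => by ring)

noncomputable def T0 (κ : ℕ) : Module.End ℤ (St κ → ℤ) where
  toFun v := fun t => ∑ c : ZMod 2, v (pred c t)
  map_add' u v := by
    funext t
    simp [Finset.sum_add_distrib]
  map_smul' a v := by
    funext t
    simp only [Pi.smul_apply, smul_eq_mul, RingHom.id_apply, Finset.mul_sum]

def del (s : St κ) : St κ → ℤ := fun t => if t = s then 1 else 0
def uno (κ : ℕ) : St κ → ℤ := fun _ => 1

lemma sum_zmod2 (f : ZMod 2 → ℤ) : ∑ c : ZMod 2, f c = f 0 + f 1 := by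
  rw [show (univ : Finset (ZMod 2)) = {0, 1} by decide]
  rw [Finset.sum_insert (by decide), Finset.sum_singleton]

lemma T_apply (v : St κ → ℤ) (t : St κ) :
    T κ v t = ∑ c : ZMod 2, sg κ (pred c t) (lastS t) * v (pred c t) := rfl

lemma T0_apply (v : St κ → ℤ) (t : St κ) :
    T0 κ v t = ∑ c : ZMod 2, v (pred c t) := rfl

end RotRec

namespace RotRec
variable {κ : ℕ}

lemma pred_mk (c : ZMod 2) (t : St κ) (a : ℕ) (h : a < κ+3) :
    pred c t ⟨a, h⟩ = if a = 0 then c else t ⟨a-1, by omega⟩ := rfl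

lemma qS_mk (a : ℕ) (h : a < κ+3) : qS κ ⟨a, h⟩ = if a = κ+2 then 0 else 1 := rfl
lemma rS_mk (a : ℕ) (h : a < κ+3) : rS κ ⟨a, h⟩ = if a = κ+1 then 0 else 1 := rfl

lemma pred_eq_q_iff (c : ZMod 2) (t : St κ) :
    (pred c t = qS κ ∧ lastS t = 1) ↔ (c = 1 ∧ t = rS κ) := by
  constructor
  · rintro ⟨h1, h2⟩
    have hc : c = 1 := by
      have h0 := congrFun h1 ⟨0, by omega⟩
      rw [pred_mk, qS_mk, if_pos rfl, if_neg (by omega)] at h0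
      exact h0
    refine ⟨hc, funext fun i => ?_⟩
    rcases Nat.lt_or_ge (i : ℕ) (κ+2) with hi | hi
    · have h2' := congrFun h1 ⟨(i:ℕ)+1, by omega⟩
      rw [pred_mk, qS_mk, if_neg (by omega)] at h2'
      have h' : t ⟨(i:ℕ)+1-1, by omega⟩ = t i := congrArg t (Fin.ext (by simp))
      rw [h'] at h2'
      rw [h2']
      show (if (i:ℕ)+1 = κ+2 then (0:ZMod 2) else 1) = if (i:ℕ) = κ+1 then 0 else 1
      by_cases hk : (i:ℕ) = κ+1
      · rw [if_pos (by omega), if_pos hk]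
      · rw [if_neg (by omega), if_neg hk]
    · have hie : (i:ℕ) = κ+2 := by omega
      have h' : t i = lastS t := congrArg t (Fin.ext (by simp; omega))
      rw [h', h2]
      show (1 : ZMod 2) = if (i:ℕ) = κ+1 then 0 else 1
      rw [if_neg (by omega)]
  · rintro ⟨hc, ht⟩
    subst hc; subst ht
    constructor
    · funext i
      show (if (i:ℕ) = 0 then 1 else if (i:ℕ)-1 = κ+1 then 0 else 1)
          = if (i:ℕ) = κ+2 then 0 else 1
      by_cases h0 : (i:ℕ) = 0
      · rw [if_pos h0, if_neg (by omega)]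
      · rw [if_neg h0]
        by_cases hk : (i:ℕ) = κ+2
        · rw [if_pos (by omega), if_pos hk]
        · rw [if_neg (by omega), if_neg hk]
    · show (if ((⟨κ+2, by omega⟩ : Fin (κ+3)):ℕ) = κ+1 then (0:ZMod 2) else 1) = 1
      rw [if_neg (by simp)]

/-- F1: T v = T0 v - 2 v(q) • δ_r  (pointwise form). -/
lemma T_eq_T0 (v : St κ → ℤ) :
    T κ v = T0 κ v - (2 * v (qS κ)) • del (rS κ) := by
  funext t
  simp only [Pi.sub_apply, Pi.smul_apply, smul_eq_mul, T_apply, T0_apply, del]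
  by_cases ht : t = rS κ
  · subst ht
    rw [if_pos rfl]
    rw [sum_zmod2, sum_zmod2]
    have h0 : sg κ (pred 0 (rS κ)) (lastS (rS κ)) = 1 := by
      unfold sg
      rw [if_neg]
      intro h
      have := (pred_eq_q_iff 0 (rS κ)).1 h
      exact absurd this.1 (by decide)
    have h1 : sg κ (pred 1 (rS κ)) (lastS (rS κ)) = -1 := by
      unfold sg
      rw [if_pos ((pred_eq_q_iff 1 (rS κ)).2 ⟨rfl, rfl⟩)]
    have hp1 : pred 1 (rS κ) = qS κ := ((pred_eq_q_iff 1 (rS κ)).2 ⟨rfl, rfl⟩).1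
    rw [h0, h1, hp1]
    ring
  · rw [if_neg ht]
    have : ∀ c : ZMod 2, sg κ (pred c t) (lastS t) = 1 := by
      intro c
      unfold sg
      rw [if_neg]
      intro h
      exact ht ((pred_eq_q_iff c t).1 h).2
    rw [sum_zmod2, sum_zmod2, this 0, this 1]
    ring

end RotRec

namespace RotRec
variable {κ : ℕ}

lemma pred_apply (c : ZMod 2) (t : St κ) (a : Fin (κ+3)) :
    pred c t a = if (a:ℕ) = 0 then c else t ⟨(a:ℕ)-1, by omega⟩ := rfl

lemma qS_apply (i : Fin (κ+3)) : qS κ i = if (i:ℕ) = κ+2 then 0 else 1 := rfl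
lemma rS_apply (i : Fin (κ+3)) : rS κ i = if (i:ℕ) = κ+1 then 0 else 1 := rfl

/-- shifted-agreement indicator:  t agrees with `w` shifted left by `j`. -/
def chi (w : St κ) (j : ℕ) : St κ → ℤ :=
  fun t => if (∀ a b : Fin (κ+3), (a:ℕ) + j = (b:ℕ) → t a = w b) then 1 else 0

lemma chi_zero (w : St κ) : chi w 0 = del w := by
  funext t
  unfold chi del
  by_cases h : t = w
  · subst h
    rw [if_pos (fun a b hab => congrArg t (Fin.ext (by omega))), if_pos rfl]
  · rw [if_neg (fun H => h (funext fun i => H i i (by omega))), if_neg h]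

lemma chi_top (w : St κ) : chi w (κ+3) = uno κ := by
  funext t
  unfold chi uno
  rw [if_pos (fun a b hab => absurd hab (by omega))]

lemma T0_chi (w : St κ) (j : ℕ) (hj : j ≤ κ+2) :
    T0 κ (chi w j) = chi w (j+1) := by
  funext t
  rw [T0_apply]
  have key : ∀ c : ZMod 2, chi w j (pred c t)
      = if c = w ⟨j, by omega⟩ then chi w (j+1) t else 0 := by
    intro c
    unfold chi
    by_cases hc : c = w ⟨j, by omega⟩
    · rw [if_pos hc]
      by_cases hC : ∀ a b : Fin (κ+3), (a:ℕ) + (j+1) = (b:ℕ) → t a = w b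
      · rw [if_pos hC, if_pos ?_]
        intro a b hab
        rcases eq_or_ne (a:ℕ) 0 with h0 | h0
        · rw [pred_apply, if_pos h0, hc]
          exact congrArg w (Fin.ext (by simp; omega))
        · rw [pred_apply, if_neg h0]
          exact hC ⟨(a:ℕ)-1, by omega⟩ b (by simp; omega)
      · rw [if_neg hC, if_neg ?_]
        intro HA
        apply hC
        intro a b hab
        have := HA ⟨(a:ℕ)+1, by omega⟩ b (by simp; omega)
        rw [pred_apply, if_neg (by simp)] at this
        rw [← this]
        exact congrArg t (Fin.ext (by simp))
    · rw [if_neg hc, if_neg ?_]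
      intro HA
      apply hc
      have := HA ⟨0, by omega⟩ ⟨j, by omega⟩ (by simp)
      rw [pred_apply, if_pos (by simp)] at this
      exact this
  calc ∑ c : ZMod 2, chi w j (pred c t)
      = ∑ c : ZMod 2, if c = w ⟨j, by omega⟩ then chi w (j+1) t else 0 :=
        Finset.sum_congr rfl (fun c _ => key c)
    _ = chi w (j+1) t := by rw [Finset.sum_ite_eq' Finset.univ]; simp

lemma chi_r_q (j : ℕ) (hj : j ≤ κ+1) : chi (rS κ) j (qS κ) = 0 := by
  unfold chi
  rw [if_neg]
  intro H
  have := H ⟨κ+1-j, by omega⟩ ⟨κ+1, by omega⟩ (by simp; omega)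
  rw [qS_mk, rS_mk, if_neg (by omega), if_pos rfl] at this
  exact one_ne_zero this

lemma chi_r_q_top : chi (rS κ) (κ+2) (qS κ) = 1 := by
  unfold chi
  rw [if_pos]
  intro a b hab
  have ha : (a:ℕ) = 0 := by omega
  have hb : (b:ℕ) = κ+2 := by omega
  rw [qS_apply, rS_apply, if_neg (by omega), if_neg (by omega)]

lemma T_chi (j : ℕ) (hj : j ≤ κ+1) :
    T κ (chi (rS κ) j) = chi (rS κ) (j+1) := by
  rw [T_eq_T0, chi_r_q j hj, T0_chi _ j (by omega)]
  simp

lemma T0_pow_del (w : St κ) (j : ℕ) (hj : j ≤ κ+3) :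
    (T0 κ ^ j) (del w) = chi w j := by
  induction j with
  | zero => rw [pow_zero]; exact (chi_zero w).symm
  | succ j ih =>
      rw [pow_succ', Module.End.mul_apply, ih (by omega), T0_chi _ j (by omega)]

lemma T_pow_del_r (j : ℕ) (hj : j ≤ κ+2) :
    (T κ ^ j) (del (rS κ)) = chi (rS κ) j := by
  induction j with
  | zero => rw [pow_zero]; exact (chi_zero (rS κ)).symm
  | succ j ih =>
      rw [pow_succ', Module.End.mul_apply, ih (by omega), T_chi j (by omega)]

lemma T_pow_del_r_top :
    (T κ ^ (κ+3)) (del (rS κ)) = uno κ - (2:ℤ) • del (rS κ) := by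
  rw [pow_succ', Module.End.mul_apply, T_pow_del_r (κ+2) le_rfl, T_eq_T0,
    T0_chi _ (κ+2) le_rfl, chi_r_q_top, chi_top]
  norm_num

lemma T0_uno : T0 κ (uno κ) = (2:ℤ) • uno κ := by
  funext t
  rw [T0_apply]
  show ∑ _c : ZMod 2, (1:ℤ) = _
  rw [sum_zmod2]
  simp [uno]

lemma T_uno : T κ (uno κ) = (2:ℤ) • uno κ - (2:ℤ) • del (rS κ) := by
  rw [T_eq_T0, T0_uno]
  show _ - ((2 * 1) • del (rS κ)) = _
  norm_num

end RotRec

namespace RotRec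
variable {κ : ℕ}

lemma sum_del (v : St κ → ℤ) : ∑ s : St κ, v s • del s = v := by
  funext t
  rw [Finset.sum_apply]
  simp only [Pi.smul_apply, del, smul_eq_mul, mul_ite, mul_one, mul_zero]
  rw [Finset.sum_congr rfl (fun s _ => by rw [show (if t = s then v s else 0) = (if s = t then v s else 0) by simp [eq_comm]])]
  rw [Finset.sum_ite_eq' Finset.univ]
  simp

lemma T0_pow_top (v : St κ → ℤ) :
    (T0 κ ^ (κ+3)) v = (∑ s : St κ, v s) • uno κ := by
  conv_lhs => rw [← sum_del v]
  rw [map_sum,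
    Finset.sum_congr rfl
      (fun s _ => by rw [map_smul, T0_pow_del s (κ+3) le_rfl, chi_top]),
    ← Finset.sum_smul]

lemma T_pow_expand (v : St κ → ℤ) : ∀ m, (T κ ^ m) v = (T0 κ ^ m) v
      - ∑ j ∈ Finset.range m,
          ((2 : ℤ) * (T κ ^ j) v (qS κ)) • (T0 κ ^ (m-1-j)) (del (rS κ))
  | 0 => by simp
  | (m+1) => by
      have hterm : ∀ j ∈ Finset.range m,
          T0 κ (((2:ℤ) * (T κ ^ j) v (qS κ)) • (T0 κ ^ (m-1-j)) (del (rS κ)))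
          = ((2:ℤ) * (T κ ^ j) v (qS κ)) • (T0 κ ^ (m-j)) (del (rS κ)) := by
        intro j hj
        rw [Finset.mem_range] at hj
        have e : m - j = (m-1-j) + 1 := by omega
        rw [map_smul, e, pow_succ', Module.End.mul_apply]
      have hs : (∑ j ∈ Finset.range m,
            T0 κ (((2:ℤ) * (T κ ^ j) v (qS κ)) • (T0 κ ^ (m-1-j)) (del (rS κ))))
          = ∑ j ∈ Finset.range m,
            ((2:ℤ) * (T κ ^ j) v (qS κ)) • (T0 κ ^ (m-j)) (del (rS κ)) :=
        Finset.sum_congr rfl hterm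
      have hgoal : ∀ j ∈ Finset.range m,
          ((2:ℤ) * (T κ ^ j) v (qS κ)) • (T0 κ ^ (m+1-1-j)) (del (rS κ))
          = ((2:ℤ) * (T κ ^ j) v (qS κ)) • (T0 κ ^ (m-j)) (del (rS κ)) := by
        intro j hj
        rw [Nat.add_sub_cancel]
      have hgs : (∑ j ∈ Finset.range (m+1),
            ((2:ℤ) * (T κ ^ j) v (qS κ)) • (T0 κ ^ (m+1-1-j)) (del (rS κ)))
          = (∑ j ∈ Finset.range m,
            ((2:ℤ) * (T κ ^ j) v (qS κ)) • (T0 κ ^ (m-j)) (del (rS κ)))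
            + ((2:ℤ) * (T κ ^ m) v (qS κ)) • del (rS κ) := by
        rw [Finset.sum_range_succ, Finset.sum_congr rfl hgoal]
        congr 1
        rw [Nat.add_sub_cancel, Nat.sub_self, pow_zero]
        rfl
      rw [hgs, pow_succ', Module.End.mul_apply, T_eq_T0 ((T κ ^ m) v),
        T_pow_expand v m, map_sub, map_sum, hs, ← Module.End.mul_apply, ← pow_succ',
        sub_sub]

noncomputable def rho (κ i : ℕ) : St κ → ℤ := (T κ ^ i) (del (rS κ))
noncomputable def theta (κ i : ℕ) : St κ → ℤ := (T κ ^ i) (uno κ)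

lemma theta_succ (i : ℕ) :
    theta κ (i+1) = (2:ℤ) • theta κ i - (2:ℤ) • rho κ i := by
  unfold theta rho
  rw [pow_succ, Module.End.mul_apply, T_uno, map_sub, map_smul, map_smul]

lemma rho_high (s : ℕ) : rho κ (κ+3+s) = theta κ s - (2:ℤ) • rho κ s := by
  unfold theta rho
  have h : κ+3+s = s + (κ+3) := by omega
  rw [h, pow_add, Module.End.mul_apply, T_pow_del_r_top, map_sub, map_smul]

noncomputable def phat (κ : ℕ) : Module.End ℤ (St κ → ℤ) :=
  T κ ^ (κ+4) - (2:ℤ) • T κ ^ (κ+3) + (2:ℤ) • T κ - (2:ℤ) • (1 : Module.End ℤ (St κ → ℤ))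

lemma phat_apply (v : St κ → ℤ) :
    phat κ v = (T κ ^ (κ+4)) v - (2:ℤ) • (T κ ^ (κ+3)) v + (2:ℤ) • T κ v - (2:ℤ) • v := by
  simp [phat, LinearMap.sub_apply, LinearMap.add_apply, LinearMap.smul_apply]

lemma phat_rho (i : ℕ) : phat κ (rho κ i) = 0 := by
  rw [phat_apply]
  have e1 : (T κ ^ (κ+4)) (rho κ i) = rho κ (κ+3+(i+1)) := by
    unfold rho
    rw [← Module.End.mul_apply, ← pow_add]
    have h : κ+4+i = κ+3+(i+1) := by omega
    rw [h]
  have e2 : (T κ ^ (κ+3)) (rho κ i) = rho κ (κ+3+i) := by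
    unfold rho
    rw [← Module.End.mul_apply, ← pow_add]
  have e3 : T κ (rho κ i) = rho κ (i+1) := by
    unfold rho
    rw [← Module.End.mul_apply, ← pow_succ']
  rw [e1, e2, e3, rho_high (i+1), rho_high i, theta_succ i]
  abel

lemma phat_uno : phat κ (uno κ) = 0 := by
  rw [phat_apply]
  have e1 : (T κ ^ (κ+4)) (uno κ) = theta κ (κ+4) := rfl
  have e2 : (T κ ^ (κ+3)) (uno κ) = theta κ (κ+3) := rfl
  have e3 : T κ (uno κ) = theta κ 1 := by
    unfold theta
    rw [pow_one]
  have e4 : uno κ = theta κ 0 := by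
    unfold theta
    rw [pow_zero]
    rfl
  rw [e1, e2, e3, e4, show κ+4 = (κ+3)+1 from rfl, theta_succ (κ+3),
    show theta κ 1 = theta κ (0+1) from rfl, theta_succ 0]
  have h5 : rho κ (κ+3) = rho κ (κ+3+0) := rfl
  rw [h5, rho_high 0]
  abel

lemma phat_T_pow (v : St κ → ℤ) : phat κ ((T κ ^ (κ+3)) v) = 0 := by
  rw [T_pow_expand v (κ+3), T0_pow_top, map_sub, map_smul, map_sum, phat_uno]
  have hterm : ∀ j ∈ Finset.range (κ+3),
      phat κ (((2:ℤ) * (T κ ^ j) v (qS κ)) • (T0 κ ^ (κ+3-1-j)) (del (rS κ))) = 0 := by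
    intro j hj
    rw [Finset.mem_range] at hj
    rw [map_smul]
    have : (T0 κ ^ (κ+3-1-j)) (del (rS κ)) = rho κ (κ+2-j) := by
      have e : κ+3-1-j = κ+2-j := by omega
      rw [e, T0_pow_del _ _ (by omega)]
      unfold rho
      rw [T_pow_del_r _ (by omega)]
    rw [this, phat_rho]
    simp
  rw [Finset.sum_congr rfl hterm]
  simp

end RotRec

namespace RotRec
variable {κ : ℕ}

def patt (κ : ℕ) : Fin (κ+4) → ZMod 2 := fun l => if (l:ℕ) = κ+2 then 0 else 1

def wd (s : St κ) {m : ℕ} (y : Fin m → ZMod 2) : ℕ → ZMod 2 :=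
  fun a => if h : a < κ+3 then s ⟨a, h⟩
    else if h' : a - (κ+3) < m then y ⟨a-(κ+3), h'⟩ else 0

def stA (s : St κ) {m : ℕ} (y : Fin m → ZMod 2) (j : ℕ) : St κ :=
  fun i => wd s y (j + (i:ℕ))

def wsg (κ : ℕ) (z : ℕ → ZMod 2) (j : ℕ) : ℤ :=
  if (∀ l : Fin (κ+4), z (j + (l:ℕ)) = patt κ l) then -1 else 1

lemma wd_lt (s : St κ) {m : ℕ} (y : Fin m → ZMod 2) (a : ℕ) (h : a < κ+3) :
    wd s y a = s ⟨a, h⟩ := dif_pos h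

lemma wd_ge (s : St κ) {m : ℕ} (y : Fin m → ZMod 2) (a : ℕ) (h1 : κ+3 ≤ a)
    (h2 : a - (κ+3) < m) : wd s y a = y ⟨a-(κ+3), h2⟩ := by
  unfold wd
  rw [dif_neg (by omega), dif_pos h2]

lemma stA_zero (s : St κ) {m : ℕ} (y : Fin m → ZMod 2) : stA s y 0 = s := by
  funext i
  show wd s y (0 + (i:ℕ)) = s i
  rw [Nat.zero_add, wd_lt s y _ i.isLt]

lemma wd_snoc_lt (s : St κ) {m : ℕ} (y : Fin m → ZMod 2) (b : ZMod 2) (a : ℕ)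
    (h : a < κ+3+m) : wd s (Fin.snoc y b) a = wd s y a := by
  unfold wd
  by_cases h1 : a < κ+3
  · rw [dif_pos h1, dif_pos h1]
  · rw [dif_neg h1, dif_neg h1]
    have h2 : a - (κ+3) < m := by omega
    rw [dif_pos h2, dif_pos (by omega : a - (κ+3) < m+1)]
    have h3 : (⟨a - (κ+3), by omega⟩ : Fin (m+1)) = Fin.castSucc ⟨a - (κ+3), h2⟩ :=
      Fin.ext (by simp)
    rw [h3, Fin.snoc_castSucc]

lemma wd_snoc_last (s : St κ) {m : ℕ} (y : Fin m → ZMod 2) (b : ZMod 2) :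
    wd s (Fin.snoc y b) (κ+3+m) = b := by
  unfold wd
  rw [dif_neg (by omega), dif_pos (by omega : κ+3+m - (κ+3) < m+1)]
  have h3 : (⟨κ+3+m - (κ+3), by omega⟩ : Fin (m+1)) = Fin.last m :=
    Fin.ext (by simp [Fin.last])
  rw [h3, Fin.snoc_last]

lemma wsg_congr (z z' : ℕ → ZMod 2) (j : ℕ)
    (h : ∀ a, j ≤ a → a ≤ j+κ+3 → z a = z' a) : wsg κ z j = wsg κ z' j := by
  unfold wsg
  refine if_congr (forall_congr' fun l => ?_) rfl rfl
  rw [h (j + (l:ℕ)) (by omega) (by omega)]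

end RotRec

namespace RotRec
variable {κ : ℕ}

def TailP (u t : St κ) : Prop :=
  ∀ i : Fin (κ+3), ∀ _h : (i:ℕ) < κ+2, t i = u ⟨(i:ℕ)+1, by omega⟩

instance (u t : St κ) : Decidable (TailP u t) := by unfold TailP; infer_instance

lemma pred_eq_iff (u t : St κ) (c : ZMod 2) :
    u = pred c t ↔ (c = u ⟨0, by omega⟩ ∧ TailP u t) := by
  constructor
  · intro hE
    constructor
    · rw [hE, pred_mk, if_pos rfl]
    · intro i hi
      have h1 := congrFun hE ⟨(i:ℕ)+1, by omega⟩
      rw [pred_mk, if_neg (by omega)] at h1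
      rw [h1]
      exact (congrArg t (Fin.ext (by simp))).symm
  · rintro ⟨hc, hT⟩
    funext i
    rcases eq_or_ne (i:ℕ) 0 with h0 | h0
    · rw [pred_apply, if_pos h0, hc]
      exact congrArg u (Fin.ext (by simp [h0]))
    · rw [pred_apply, if_neg h0]
      have := hT ⟨(i:ℕ)-1, by omega⟩ (by simp; omega)
      rw [this]
      exact (congrArg u (Fin.ext (by simp; omega))).symm

lemma stA_succ_eq_iff (s : St κ) {m : ℕ} (y : Fin m → ZMod 2) (b : ZMod 2) (t : St κ) :
    stA s (Fin.snoc y b) (m+1) = t ↔ (b = lastS t ∧ TailP (stA s y m) t) := by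
  constructor
  · intro H
    constructor
    · have h1 := congrFun H ⟨κ+2, by omega⟩
      show b = t ⟨κ+2, by omega⟩
      rw [← h1]
      show b = wd s (Fin.snoc y b) ((m+1) + (κ+2))
      rw [show (m+1) + (κ+2) = κ+3+m by omega, wd_snoc_last]
    · intro i hi
      have h1 := congrFun H ⟨(i:ℕ), by omega⟩
      calc t i = t ⟨(i:ℕ), by omega⟩ := congrArg t (Fin.ext rfl)
        _ = stA s (Fin.snoc y b) (m+1) ⟨(i:ℕ), by omega⟩ := h1.symm
        _ = wd s (Fin.snoc y b) ((m+1) + (i:ℕ)) := rfl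
        _ = wd s y ((m+1) + (i:ℕ)) := wd_snoc_lt s y b _ (by omega)
        _ = wd s y (m + ((i:ℕ)+1)) := by rw [show (m+1) + (i:ℕ) = m + ((i:ℕ)+1) by omega]
        _ = stA s y m ⟨(i:ℕ)+1, by omega⟩ := rfl
  · rintro ⟨hb, hT⟩
    funext i
    rcases eq_or_ne (i:ℕ) (κ+2) with h2 | h2
    · calc stA s (Fin.snoc y b) (m+1) i
          = wd s (Fin.snoc y b) ((m+1) + (i:ℕ)) := rfl
        _ = wd s (Fin.snoc y b) (κ+3+m) := by rw [show (m+1) + (i:ℕ) = κ+3+m by omega]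
        _ = b := wd_snoc_last s y b
        _ = lastS t := hb
        _ = t ⟨κ+2, by omega⟩ := rfl
        _ = t i := congrArg t (Fin.ext (by simp [h2]))
    · have hi : (i:ℕ) < κ+2 := by omega
      calc stA s (Fin.snoc y b) (m+1) i
          = wd s (Fin.snoc y b) ((m+1) + (i:ℕ)) := rfl
        _ = wd s y ((m+1) + (i:ℕ)) := wd_snoc_lt s y b _ (by omega)
        _ = wd s y (m + ((i:ℕ)+1)) := by rw [show (m+1) + (i:ℕ) = m + ((i:ℕ)+1) by omega]
        _ = stA s y m ⟨(i:ℕ)+1, by omega⟩ := rfl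
        _ = t i := (hT i hi).symm

end RotRec

namespace RotRec
variable {κ : ℕ}

lemma wsg_last (s : St κ) {m : ℕ} (y : Fin m → ZMod 2) (b : ZMod 2) :
    wsg κ (wd s (Fin.snoc y b)) m = sg κ (stA s y m) b := by
  unfold wsg sg
  refine if_congr ?_ rfl rfl
  constructor
  · intro H
    constructor
    · funext i
      calc stA s y m i = wd s y (m + (i:ℕ)) := rfl
        _ = wd s (Fin.snoc y b) (m + (i:ℕ)) := (wd_snoc_lt s y b _ (by omega)).symm
        _ = wd s (Fin.snoc y b) (m + ((⟨(i:ℕ), by omega⟩ : Fin (κ+4)):ℕ)) := rfl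
        _ = patt κ ⟨(i:ℕ), by omega⟩ := H ⟨(i:ℕ), by omega⟩
        _ = qS κ i := by
              show (if (i:ℕ) = κ+2 then (0:ZMod 2) else 1) = _
              rw [qS_apply]
    · have h1 := H ⟨κ+3, by omega⟩
      calc b = wd s (Fin.snoc y b) (κ+3+m) := (wd_snoc_last s y b).symm
        _ = wd s (Fin.snoc y b) (m + ((⟨κ+3, by omega⟩ : Fin (κ+4)):ℕ)) := by
              rw [show m + ((⟨κ+3, by omega⟩ : Fin (κ+4)):ℕ) = κ+3+m from by simp; omega]
        _ = patt κ ⟨κ+3, by omega⟩ := h1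
        _ = 1 := by
              show (if (κ+3:ℕ) = κ+2 then (0:ZMod 2) else 1) = 1
              rw [if_neg (by omega)]
  · rintro ⟨hq, hb⟩ l
    rcases eq_or_ne (l:ℕ) (κ+3) with h3 | h3
    · calc wd s (Fin.snoc y b) (m + (l:ℕ))
          = wd s (Fin.snoc y b) (κ+3+m) := by rw [show m + (l:ℕ) = κ+3+m by omega]
        _ = b := wd_snoc_last s y b
        _ = 1 := hb
        _ = patt κ l := by
              show (1:ZMod 2) = if (l:ℕ) = κ+2 then 0 else 1
              rw [if_neg (by omega)]
    · have hl : (l:ℕ) < κ+3 := by omega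
      calc wd s (Fin.snoc y b) (m + (l:ℕ))
          = wd s y (m + (l:ℕ)) := wd_snoc_lt s y b _ (by omega)
        _ = stA s y m ⟨(l:ℕ), by omega⟩ := rfl
        _ = qS κ ⟨(l:ℕ), by omega⟩ := by rw [hq]
        _ = patt κ l := by
              rw [qS_mk]
              show _ = if (l:ℕ) = κ+2 then (0:ZMod 2) else 1
              rfl

lemma prod_snoc (s : St κ) {m : ℕ} (y : Fin m → ZMod 2) (b : ZMod 2) :
    (∏ j ∈ Finset.range (m+1), wsg κ (wd s (Fin.snoc y b)) j)
    = (∏ j ∈ Finset.range m, wsg κ (wd s y) j) * sg κ (stA s y m) b := by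
  rw [Finset.prod_range_succ, wsg_last]
  congr 1
  refine Finset.prod_congr rfl (fun j hj => ?_)
  rw [Finset.mem_range] at hj
  exact wsg_congr _ _ j (fun a ha1 ha2 => wd_snoc_lt s y b a (by omega))

def snocEquiv (m : ℕ) : ((Fin m → ZMod 2) × ZMod 2) ≃ (Fin (m+1) → ZMod 2) where
  toFun p := Fin.snoc p.1 p.2
  invFun y := (Fin.init y, y (Fin.last m))
  left_inv p := by
    refine Prod.ext ?_ ?_ <;> simp
  right_inv y := by
    simp [Fin.snoc_init_self]

lemma W_lemma (s : St κ) : ∀ (m : ℕ) (t : St κ), (T κ ^ m) (del s) t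
    = ∑ y : Fin m → ZMod 2,
        if stA s y m = t then ∏ j ∈ Finset.range m, wsg κ (wd s y) j else 0
  | 0, t => by
      rw [pow_zero]
      show del s t = _
      rw [Fintype.sum_unique]
      rw [stA_zero]
      simp [del, eq_comm]
  | (m+1), t => by
      rw [pow_succ', Module.End.mul_apply, T_apply]
      have hin : ∀ c : ZMod 2, (T κ ^ m) (del s) (pred c t)
          = ∑ y : Fin m → ZMod 2,
              if stA s y m = pred c t
              then ∏ j ∈ Finset.range m, wsg κ (wd s y) j else 0 :=
        fun c => W_lemma s m (pred c t)
      calc (∑ c : ZMod 2, sg κ (pred c t) (lastS t) * (T κ ^ m) (del s) (pred c t))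
          = ∑ c : ZMod 2, ∑ y : Fin m → ZMod 2,
              sg κ (pred c t) (lastS t) *
                (if stA s y m = pred c t
                 then ∏ j ∈ Finset.range m, wsg κ (wd s y) j else 0) := by
            refine Finset.sum_congr rfl (fun c _ => ?_)
            rw [hin c, Finset.mul_sum]
        _ = ∑ y : Fin m → ZMod 2, ∑ c : ZMod 2,
              sg κ (pred c t) (lastS t) *
                (if stA s y m = pred c t
                 then ∏ j ∈ Finset.range m, wsg κ (wd s y) j else 0) :=
            Finset.sum_comm
        _ = ∑ y : Fin m → ZMod 2,
              (if TailP (stA s y m) t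
               then sg κ (stA s y m) (lastS t) *
                 ∏ j ∈ Finset.range m, wsg κ (wd s y) j else 0) := by
            refine Finset.sum_congr rfl (fun y _ => ?_)
            have key : ∀ c : ZMod 2,
                sg κ (pred c t) (lastS t) *
                  (if stA s y m = pred c t
                   then ∏ j ∈ Finset.range m, wsg κ (wd s y) j else 0)
                = if c = stA s y m ⟨0, by omega⟩
                  then (if TailP (stA s y m) t
                        then sg κ (stA s y m) (lastS t) *
                          ∏ j ∈ Finset.range m, wsg κ (wd s y) j else 0)
                  else 0 := by
              intro c
              by_cases hE : stA s y m = pred c t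
              · have hconj := (pred_eq_iff (stA s y m) t c).1 hE
                rw [if_pos hE, if_pos hconj.1, if_pos hconj.2, ← hE]
              · rw [if_neg hE, mul_zero]
                by_cases hc : c = stA s y m ⟨0, by omega⟩
                · rw [if_pos hc]
                  have hT : ¬ TailP (stA s y m) t := by
                    intro hT
                    exact hE ((pred_eq_iff (stA s y m) t c).2 ⟨hc, hT⟩)
                  rw [if_neg hT]
                · rw [if_neg hc]
            rw [Finset.sum_congr rfl (fun c _ => key c), Finset.sum_ite_eq' Finset.univ]
            simp
        _ = ∑ y : Fin m → ZMod 2, ∑ b : ZMod 2,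
              (if stA s (Fin.snoc y b) (m+1) = t
               then ∏ j ∈ Finset.range (m+1), wsg κ (wd s (Fin.snoc y b)) j else 0) := by
            refine Finset.sum_congr rfl (fun y _ => ?_)
            have key2 : ∀ b : ZMod 2,
                (if stA s (Fin.snoc y b) (m+1) = t
                 then ∏ j ∈ Finset.range (m+1), wsg κ (wd s (Fin.snoc y b)) j else 0)
                = if b = lastS t
                  then (if TailP (stA s y m) t
                        then (∏ j ∈ Finset.range m, wsg κ (wd s y) j) *
                          sg κ (stA s y m) b else 0)
                  else 0 := by
              intro b
              by_cases hE : stA s (Fin.snoc y b) (m+1) = t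
              · have hconj := (stA_succ_eq_iff s y b t).1 hE
                rw [if_pos hE, if_pos hconj.1, if_pos hconj.2, prod_snoc]
              · rw [if_neg hE]
                by_cases hb : b = lastS t
                · rw [if_pos hb]
                  have hT : ¬ TailP (stA s y m) t := by
                    intro hT
                    exact hE ((stA_succ_eq_iff s y b t).2 ⟨hb, hT⟩)
                  rw [if_neg hT]
                · rw [if_neg hb]
            rw [Finset.sum_congr rfl (fun b _ => key2 b), Finset.sum_ite_eq' Finset.univ]
            by_cases hT : TailP (stA s y m) t
            · rw [if_pos hT, if_pos hT]
              simp [mul_comm]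
            · rw [if_neg hT, if_neg hT]
              simp
        _ = ∑ p : (Fin m → ZMod 2) × ZMod 2,
              (if stA s (Fin.snoc p.1 p.2) (m+1) = t
               then ∏ j ∈ Finset.range (m+1), wsg κ (wd s (Fin.snoc p.1 p.2)) j else 0) := by
            rw [Fintype.sum_prod_type]
        _ = ∑ y' : Fin (m+1) → ZMod 2,
              (if stA s y' (m+1) = t
               then ∏ j ∈ Finset.range (m+1), wsg κ (wd s y') j else 0) :=
            Equiv.sum_comp (snocEquiv m)
              (fun y' => if stA s y' (m+1) = t
               then ∏ j ∈ Finset.range (m+1), wsg κ (wd s y') j else 0)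

end RotRec

namespace RotRec
variable {κ : ℕ}

def cw {a : ℕ} (x : Fin a → ZMod 2) : ℕ → ZMod 2 :=
  fun b => if h : b % a < a then x ⟨b % a, h⟩ else 0

lemma cw_lt {a : ℕ} (x : Fin a → ZMod 2) (b : ℕ) (h : b < a) :
    cw x b = x ⟨b, h⟩ := by
  unfold cw
  rw [dif_pos (by rw [Nat.mod_eq_of_lt h]; exact h)]
  congr 1
  exact Fin.ext (by simp [Nat.mod_eq_of_lt h])

lemma cw_add {a : ℕ} (x : Fin a → ZMod 2) (b : ℕ) (h : 0 < a) :
    cw x (a + b) = cw x b := by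
  unfold cw
  rw [Nat.add_mod_left]

/-- words from condition-satisfying pairs agree with the cyclic word of their trace. -/
lemma wd_eq_cw (s : St κ) {a : ℕ} (y : Fin a → ZMod 2) (ha : κ+3 ≤ a)
    (hC : stA s y a = s) (b : ℕ) (hb : b < a + (κ+3)) :
    wd s y b = cw (fun ii : Fin a => wd s y (ii:ℕ)) b := by
  rcases Nat.lt_or_ge b a with h | h
  · rw [cw_lt _ b h]
  · have hr : b = a + (b - a) := by omega
    have hba : b - a < κ+3 := by omega
    rw [hr, cw_add _ _ (by omega), cw_lt _ _ (by omega)]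
    show wd s y (a + (b-a)) = wd s y (b-a)
    calc wd s y (a + (b-a)) = stA s y a ⟨b-a, by omega⟩ := rfl
      _ = s ⟨b-a, by omega⟩ := by rw [hC]
      _ = wd s y (b-a) := (wd_lt s y _ (by omega)).symm

lemma wd_of_cw {a : ℕ} (x : Fin a → ZMod 2) (ha : κ+3 ≤ a) (b : ℕ)
    (hb : b < a + (κ+3)) :
    wd (fun i : Fin (κ+3) => cw x (i:ℕ)) (fun j : Fin a => cw x (κ+3 + (j:ℕ))) b
    = cw x b := by
  rcases Nat.lt_or_ge b (κ+3) with h | h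
  · rw [wd_lt _ _ _ h]
  · have h2 : b - (κ+3) < a := by omega
    rw [wd_ge _ _ _ h h2]
    show cw x (κ+3 + (b - (κ+3))) = cw x b
    congr 1
    omega

lemma trace_eq (a : ℕ) (ha : κ+3 ≤ a) :
    ∑ s : St κ, (T κ ^ a) (del s) s
    = ∑ x : Fin a → ZMod 2, ∏ j ∈ Finset.range a, wsg κ (cw x) j := by
  have step1 : ∑ s : St κ, (T κ ^ a) (del s) s
      = ∑ p : St κ × (Fin a → ZMod 2),
          if stA p.1 p.2 a = p.1
          then ∏ j ∈ Finset.range a, wsg κ (wd p.1 p.2) j else 0 := by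
    rw [Fintype.sum_prod_type]
    exact Finset.sum_congr rfl (fun s _ => W_lemma s a s)
  rw [step1, ← Finset.sum_filter]
  refine Finset.sum_bij'
    (fun p _ => (fun ii : Fin a => wd p.1 p.2 (ii:ℕ)))
    (fun x _ => ((fun i : Fin (κ+3) => cw x (i:ℕ)), (fun j : Fin a => cw x (κ+3 + (j:ℕ)))))
    ?_ ?_ ?_ ?_ ?_
  · intro p hp
    exact Finset.mem_univ _
  · intro x hx
    rw [Finset.mem_filter]
    refine ⟨Finset.mem_univ _, ?_⟩
    funext i
    calc stA (fun i : Fin (κ+3) => cw x (i:ℕ)) (fun j : Fin a => cw x (κ+3 + (j:ℕ))) a i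
        = wd (fun i : Fin (κ+3) => cw x (i:ℕ)) (fun j : Fin a => cw x (κ+3 + (j:ℕ))) (a + (i:ℕ)) := rfl
      _ = cw x (a + (i:ℕ)) := wd_of_cw x ha _ (by omega)
      _ = cw x (i:ℕ) := cw_add x _ (by omega)
  · intro p hp
    rw [Finset.mem_filter] at hp
    obtain ⟨-, hC⟩ := hp
    refine Prod.ext ?_ ?_
    · funext i
      show cw (fun ii : Fin a => wd p.1 p.2 (ii:ℕ)) (i:ℕ) = p.1 i
      rw [← wd_eq_cw p.1 p.2 ha hC (i:ℕ) (by omega), wd_lt p.1 p.2 _ (by omega)]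
    · funext j
      show cw (fun ii : Fin a => wd p.1 p.2 (ii:ℕ)) (κ+3 + (j:ℕ)) = p.2 j
      rw [← wd_eq_cw p.1 p.2 ha hC _ (by omega), wd_ge p.1 p.2 _ (by omega) (by omega)]
      exact congrArg p.2 (Fin.ext (by simp))
  · intro x hx
    funext ii
    show wd (fun i : Fin (κ+3) => cw x (i:ℕ)) (fun j : Fin a => cw x (κ+3 + (j:ℕ))) (ii:ℕ) = x ii
    rw [wd_of_cw x ha _ (by omega), cw_lt x _ (by omega)]
  · intro p hp
    rw [Finset.mem_filter] at hp
    obtain ⟨-, hC⟩ := hp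
    refine Finset.prod_congr rfl (fun j hj => ?_)
    rw [Finset.mem_range] at hj
    exact wsg_congr _ _ j (fun b hb1 hb2 => wd_eq_cw p.1 p.2 ha hC b (by omega))

end RotRec

namespace RotRec
variable {κ : ℕ}

lemma patt_mk (l : ℕ) (h : l < κ+4) : patt κ ⟨l, h⟩ = if l = κ+2 then 0 else 1 := rfl

lemma zmod2_ne0 : ∀ z : ZMod 2, z ≠ 0 → z = 1 := by decide
lemma zmod2_ne1 : ∀ z : ZMod 2, z ≠ 1 → z = 0 := by decide
lemma zmod2_self : ∀ z : ZMod 2, z + z = 0 := by decide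

lemma window_eq (w : ℕ → ZMod 2) :
    (∏ l ∈ Finset.range (κ+4), w l) + (∏ l ∈ insert (κ+3) (Finset.range (κ+2)), w l)
    = if (∀ l : Fin (κ+4), w (l:ℕ) = patt κ l) then 1 else 0 := by
  have hsplit : (∏ l ∈ Finset.range (κ+4), w l)
      = ((∏ l ∈ Finset.range (κ+2), w l) * w (κ+2)) * w (κ+3) := by
    rw [show κ+4 = (κ+2)+1+1 from rfl, Finset.prod_range_succ, Finset.prod_range_succ]
  have hins : (∏ l ∈ insert (κ+3) (Finset.range (κ+2)), w l)
      = w (κ+3) * ∏ l ∈ Finset.range (κ+2), w l :=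
    Finset.prod_insert (by simp)
  rw [hsplit, hins]
  by_cases hc : ∀ l : Fin (κ+4), w (l:ℕ) = patt κ l
  · rw [if_pos hc]
    have h2 : w (κ+2) = 0 := by
      have := hc ⟨κ+2, by omega⟩
      rw [patt_mk, if_pos rfl] at this
      exact this
    have h3 : w (κ+3) = 1 := by
      have := hc ⟨κ+3, by omega⟩
      rw [patt_mk, if_neg (by omega)] at this
      exact this
    have h1 : (∏ l ∈ Finset.range (κ+2), w l) = 1 :=
      Finset.prod_eq_one (fun l hl => by
        rw [Finset.mem_range] at hl
        have := hc ⟨l, by omega⟩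
        rw [patt_mk, if_neg (by omega)] at this
        exact this)
    rw [h1, h2, h3]
    norm_num
  · rw [if_neg hc]
    push_neg at hc
    obtain ⟨l, hl⟩ := hc
    rcases eq_or_ne (l:ℕ) (κ+2) with h | h
    · have h2 : w (κ+2) = 1 := by
        apply zmod2_ne0
        intro h0
        apply hl
        have e : patt κ l = 0 := by
          show (if (l:ℕ) = κ+2 then (0:ZMod 2) else 1) = 0
          rw [if_pos h]
        rw [e, h]
        exact h0
      rw [h2, mul_one]
      rw [mul_comm (w (κ+3)) _]
      exact zmod2_self _
    · rcases eq_or_ne (l:ℕ) (κ+3) with h' | h'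
      · have h3 : w (κ+3) = 0 := by
          apply zmod2_ne1
          intro h1
          apply hl
          have e : patt κ l = 1 := by
            show (if (l:ℕ) = κ+2 then (0:ZMod 2) else 1) = 1
            rw [if_neg h]
          rw [e, h']
          exact h1
        rw [h3]
        simp
      · have hlr : (l:ℕ) < κ+2 := by
          have := l.isLt
          omega
        have h0 : w (l:ℕ) = 0 := by
          apply zmod2_ne1
          intro h1
          apply hl
          have e : patt κ l = 1 := by
            show (if (l:ℕ) = κ+2 then (0:ZMod 2) else 1) = 1
            rw [if_neg h]
          rw [e, h1]
        have h1 : (∏ l' ∈ Finset.range (κ+2), w l') = 0 :=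
          Finset.prod_eq_zero (Finset.mem_range.2 hlr) h0
        rw [h1]
        simp

lemma neg_one_val_add : ∀ u v : ZMod 2,
    (-1:ℤ) ^ ((u+v).val) = (-1:ℤ) ^ u.val * (-1:ℤ) ^ v.val := by decide

lemma neg_one_val_sum (I : Finset ℕ) (f : ℕ → ZMod 2) :
    (-1:ℤ) ^ ((∑ i ∈ I, f i).val) = ∏ i ∈ I, (-1:ℤ) ^ ((f i).val) := by
  classical
  induction I using Finset.induction_on with
  | empty => simp
  | insert _ _ hni ih =>
      rw [Finset.sum_insert hni, Finset.prod_insert hni, neg_one_val_add, ih]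

lemma gfun_eq_prod {a : ℕ} (ha : 0 < a) (x : Fin a → ZMod 2) :
    (-1:ℤ) ^ ((Gfun (κ+4) a x).val) = ∏ j ∈ Finset.range a, wsg κ (cw x) j := by
  have hext : ∀ b : ℕ, extVar x (b % a) = cw x b := by
    intro b
    unfold extVar cw
    have hlt : b % a < a := Nat.mod_lt _ ha
    rw [dif_pos hlt]
  have hG : Gfun (κ+4) a x
      = ∑ i ∈ Finset.range a,
          ((∏ l ∈ Finset.range (κ+4), cw x (i + l))
            + (∏ l ∈ insert (κ+3) (Finset.range (κ+2)), cw x (i + l))) := by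
    show rotOffsets (Finset.range (κ+4)) a x
        + rotOffsets (insert (κ+4-1) (Finset.range (κ+4-2))) a x = _
    have e1 : κ+4-1 = κ+3 := rfl
    have e2 : κ+4-2 = κ+2 := rfl
    rw [e1, e2]
    unfold rotOffsets
    rw [← Finset.sum_add_distrib]
    refine Finset.sum_congr rfl (fun i _ => ?_)
    exact congrArg₂ (· + ·) (Finset.prod_congr rfl (fun l _ => hext (i+l)))
      (Finset.prod_congr rfl (fun l _ => hext (i+l)))
  rw [hG, neg_one_val_sum]
  refine Finset.prod_congr rfl (fun i _ => ?_)
  rw [window_eq (fun l => cw x (i + l))]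
  unfold wsg
  by_cases hcond : ∀ l : Fin (κ+4), cw x (i + (l:ℕ)) = patt κ l
  · rw [if_pos hcond, if_pos hcond]
    decide
  · rw [if_neg hcond, if_neg hcond]
    decide

end RotRec

namespace RotRec
variable {κ : ℕ}

lemma boolExpSum_eq_trace (a : ℕ) (ha : κ+3 ≤ a) :
    boolExpSum a (Gfun (κ+4) a) = ∑ s : St κ, (T κ ^ a) (del s) s := by
  rw [trace_eq a ha]
  unfold boolExpSum
  exact Finset.sum_congr rfl (fun x _ => gfun_eq_prod (by omega) x)

lemma key_pointwise (b : ℕ) (hb : κ+3 ≤ b) (s : St κ) :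
    (T κ ^ ((κ+4)+b)) (del s)
      = (2:ℤ) • (T κ ^ ((κ+3)+b)) (del s) - (2:ℤ) • (T κ ^ (1+b)) (del s)
        + (2:ℤ) • (T κ ^ b) (del s) := by
  have hc : b = (κ+3) + (b - (κ+3)) := by omega
  have h0 : phat κ ((T κ ^ b) (del s)) = 0 := by
    rw [hc, pow_add, Module.End.mul_apply]
    exact phat_T_pow _
  rw [phat_apply] at h0
  have e1 : (T κ ^ (κ+4)) ((T κ ^ b) (del s)) = (T κ ^ ((κ+4)+b)) (del s) := by
    rw [← Module.End.mul_apply, ← pow_add]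
  have e2 : (T κ ^ (κ+3)) ((T κ ^ b) (del s)) = (T κ ^ ((κ+3)+b)) (del s) := by
    rw [← Module.End.mul_apply, ← pow_add]
  have e3 : T κ ((T κ ^ b) (del s)) = (T κ ^ (1+b)) (del s) := by
    rw [← Module.End.mul_apply, ← pow_succ', Nat.add_comm b 1]
  rw [e1, e2, e3] at h0
  calc (T κ ^ ((κ+4)+b)) (del s)
      = ((T κ ^ ((κ+4)+b)) (del s) - (2:ℤ) • (T κ ^ ((κ+3)+b)) (del s)
          + (2:ℤ) • (T κ ^ (1+b)) (del s) - (2:ℤ) • (T κ ^ b) (del s))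
        + ((2:ℤ) • (T κ ^ ((κ+3)+b)) (del s) - (2:ℤ) • (T κ ^ (1+b)) (del s)
          + (2:ℤ) • (T κ ^ b) (del s)) := by abel
    _ = _ := by rw [h0, zero_add]

theorem main_kappa (κ n : ℕ) (hn : 2*(κ+4) ≤ n) :
    boolExpSum n (Gfun (κ+4) n) =
      2 * boolExpSum (n-1) (Gfun (κ+4) (n-1))
      - 2 * boolExpSum (n-(κ+3)) (Gfun (κ+4) (n-(κ+3)))
      + 2 * boolExpSum (n-(κ+4)) (Gfun (κ+4) (n-(κ+4))) := by
  obtain ⟨b, rfl⟩ : ∃ b, n = (κ+4) + b := ⟨n - (κ+4), by omega⟩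
  have hb : κ+3 ≤ b := by omega
  have h2 : κ+4+b-1 = (κ+3)+b := by omega
  have h3 : κ+4+b-(κ+3) = 1+b := by omega
  have h4 : κ+4+b-(κ+4) = b := by omega
  rw [h2, h3, h4,
      boolExpSum_eq_trace ((κ+4)+b) (by omega), boolExpSum_eq_trace ((κ+3)+b) (by omega),
      boolExpSum_eq_trace (1+b) (by omega), boolExpSum_eq_trace b (by omega)]
  have expand : ∀ s : St κ, (T κ ^ ((κ+4)+b)) (del s) s
      = 2 * (T κ ^ ((κ+3)+b)) (del s) s - 2 * (T κ ^ (1+b)) (del s) s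
        + 2 * (T κ ^ b) (del s) s := by
    intro s
    have := congrFun (key_pointwise b hb s) s
    simpa using this
  rw [Finset.sum_congr rfl (fun s _ => expand s)]
  rw [Finset.sum_add_distrib, Finset.sum_sub_distrib, ← Finset.mul_sum, ← Finset.mul_sum,
    ← Finset.mul_sum]

end RotRec


/-- For every `k ≥ 4` the sequence `{S(R_{2,3,…,k−1,k}(n) + R_{2,3,…,k−2,k}(n))}`
satisfies the homogeneous linear recurrence with characteristic polynomial
`X^k − 2X^{k−1} + 2X − 2`, i.e. `a(n) = 2a(n−1) − 2a(n−(k−1)) + 2a(n−k)` for `n ≥ 2k`. -/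
theorem rotation_pair_expSum_linear_recurrence (k : ℕ) (hk : 4 ≤ k) (n : ℕ) (hn : 2 * k ≤ n) :
    boolExpSum n (Gfun k n) =
      2 * boolExpSum (n - 1) (Gfun k (n - 1))
        - 2 * boolExpSum (n - (k - 1)) (Gfun k (n - (k - 1)))
        + 2 * boolExpSum (n - k) (Gfun k (n - k)) := by
  obtain ⟨κ, rfl⟩ : ∃ κ, k = κ + 4 := ⟨k - 4, by omega⟩
  have h1 : κ + 4 - 1 = κ + 3 := rfl
  rw [h1]
  exact RotRec.main_kappa κ n hn
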